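/- Let M be an n×n real matrix with ‖exp(tM)‖ ≤ K e^{−λt} for all t ≥ 0 (for some constants K, λ > 0), let T > 0, c ∈ ℝⁿ, and let h : [0,T] → ℝⁿ be continuous with |h(t)| ≤ K₀ e^{−λ₀(T−t)} for all t ∈ [0,T], for some K₀, λ₀ > 0 with λ₀ ≠ λ. If y : [0,T] → ℝⁿ is differentiable with y′(t) = M y(t) + h(t) for all t ∈ [0,T], then |y(t)| ≤ K e^{−λt}|y(0)| + K′(e^{−λt} + e^{−λ(T−t)} + e^{−λ₀(T−t)}) for all t ∈ [0,T], where K′ > 0 depends only on K, λ, K₀, λ₀ (and not on T); in particular there exist constants K″, μ > 0 independent of T with |y(t)| ≤ K″(|y(0)| + 1)(e^{−μt} + e^{−μ(T−t)}) on [0,T]. -/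

import Mathlib

/-! Variation of constants, without integrals. For fixed `t`, the function
`w u = exp((t - u) M) y u` has derivative `exp((t - u) M) h u`, whose Euclidean norm is at
most `K K₀ e^{-λ(t-u)} e^{-λ₀(T-u)}`, the derivative of
`B u = K K₀/(λ+λ₀) e^{-λ(t-u) - λ₀(T-u)}`. The mean value inequality then gives
`|y t| ≤ |exp(tM) y 0| + B t - B 0 ≤ K e^{-λt} |y 0| + K K₀/(λ+λ₀) e^{-λ₀(T-t)}`,
which implies both bounds, the second with `μ = min λ λ₀`. -/

open Matrix

/-- Frobenius norm of a real matrix. -/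
noncomputable def frobNorm {k l : ℕ} (M : Matrix (Fin k) (Fin l) ℝ) : ℝ :=
  Real.sqrt (∑ i, ∑ j, (M i j) ^ 2)

/-- Euclidean norm of a vector in `ℝⁿ`. -/
noncomputable def eNorm {k : ℕ} (v : Fin k → ℝ) : ℝ :=
  Real.sqrt (∑ i, (v i) ^ 2)

/-- Matrix exponential of a real square matrix. -/
noncomputable def matExp {k : ℕ} (M : Matrix (Fin k) (Fin k) ℝ) : Matrix (Fin k) (Fin k) ℝ :=
  NormedSpace.exp M

open Set WithLp

theorem norm_sub_le_of_norm_deriv_le_deriv {E : Type*} [NormedAddCommGroup E] [NormedSpace ℝ E]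
    {f f' : ℝ → E} {B B' : ℝ → ℝ} {a b : ℝ} (hab : a ≤ b)
    (hf : ∀ x ∈ Icc a b, HasDerivAt f (f' x) x) (hB : ∀ x ∈ Icc a b, HasDerivAt B (B' x) x)
    (bound : ∀ x ∈ Ico a b, ‖f' x‖ ≤ B' x) : ‖f b - f a‖ ≤ B b - B a := by
  refine image_norm_le_of_norm_deriv_right_le_deriv_boundary' (f := fun x => f x - f a)
    (B := fun x => B x - B a) ?_
    (fun x hx => ((hf x (Ico_subset_Icc_self hx)).sub_const _).hasDerivWithinAt) (by simp) ?_
    (fun x hx => ((hB x (Ico_subset_Icc_self hx)).sub_const _).hasDerivWithinAt) bound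
    (right_mem_Icc.2 hab)
  · exact fun x hx => ((hf x hx).continuousAt.sub continuousAt_const).continuousWithinAt
  · exact fun x hx => ((hB x hx).continuousAt.sub continuousAt_const).continuousWithinAt

section

open scoped Matrix.Norms.Frobenius

theorem Matrix.frobenius_norm_toLp_mulVec_le {m n α : Type*} [Fintype m] [Fintype n] [RCLike α]
    (A : Matrix m n α) (v : n → α) : ‖toLp 2 (A *ᵥ v)‖ ≤ ‖A‖ * ‖toLp 2 v‖ := by
  rw [← frobenius_norm_replicateCol (ι := Unit), replicateCol_mulVec,
    ← frobenius_norm_replicateCol (ι := Unit) v]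
  exact frobenius_norm_mul A _

theorem frobNorm_eq_norm {k l : ℕ} (A : Matrix (Fin k) (Fin l) ℝ) : frobNorm A = ‖A‖ := by
  simp [frobNorm, frobenius_norm_def, Real.sqrt_eq_rpow]

theorem eNorm_eq_norm_toLp {k : ℕ} (v : Fin k → ℝ) : eNorm v = ‖toLp 2 v‖ := by
  simp [eNorm, EuclideanSpace.norm_eq]

theorem hasDerivAt_exp_sub_smul_mulVec {m : Type*} [Fintype m] [DecidableEq m]
    (M : Matrix m m ℝ) (t : ℝ) {y : ℝ → m → ℝ} {v : m → ℝ} {u : ℝ}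
    (hy : HasDerivAt y (M *ᵥ y u + v) u) :
    HasDerivAt (fun s => NormedSpace.exp ((t - s) • M) *ᵥ y s)
      (NormedSpace.exp ((t - u) • M) *ᵥ v) u := by
  have hE : HasDerivAt (fun s : ℝ => NormedSpace.exp ((t - s) • M))
      (-(M * NormedSpace.exp ((t - u) • M))) u := by
    have := (hasDerivAt_exp_smul_const' M (t - u)).scomp u ((hasDerivAt_id u).const_sub t)
    rw [neg_one_smul] at this
    exact this
  have hcomm : Commute (NormedSpace.exp ((t - u) • M)) M :=
    ((Commute.refl M).smul_left (t - u)).exp_left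
  have key := (mulVecBilin ℝ ℝ).toContinuousBilinearMap.hasDerivAt_of_bilinear
    (fun _ => hE) (fun _ => hy)
  refine key.congr_deriv ?_
  simp only [LinearMap.toContinuousBilinearMap_apply, mulVecBilin_apply]
  rw [mulVec_add, neg_mulVec, mulVec_mulVec, hcomm.eq]
  abel

theorem norm_toLp_le_of_hasDerivAt_mulVec_add {m : Type*} [Fintype m] [DecidableEq m]
    (M : Matrix m m ℝ) {y h : ℝ → m → ℝ} {B B' : ℝ → ℝ} {t : ℝ} (ht : 0 ≤ t)
    (hy : ∀ u ∈ Icc 0 t, HasDerivAt y (M *ᵥ y u + h u) u)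
    (hB : ∀ u ∈ Icc 0 t, HasDerivAt B (B' u) u)
    (bound : ∀ u ∈ Ico 0 t, ‖toLp 2 (NormedSpace.exp ((t - u) • M) *ᵥ h u)‖ ≤ B' u) :
    ‖toLp 2 (y t)‖ ≤ ‖toLp 2 (NormedSpace.exp (t • M) *ᵥ y 0)‖ + (B t - B 0) := by
  set f : ℝ → EuclideanSpace ℝ m := fun s => toLp 2 (NormedSpace.exp ((t - s) • M) *ᵥ y s)
  have hf : ∀ u ∈ Icc 0 t, HasDerivAt f (toLp 2 (NormedSpace.exp ((t - u) • M) *ᵥ h u)) u :=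
    fun u hu => (EuclideanSpace.equiv m ℝ).symm.hasFDerivAt.comp_hasDerivAt u
      (hasDerivAt_exp_sub_smul_mulVec M t (hy u hu))
  have hft : f t = toLp 2 (y t) := by simp [f]
  have hf0 : f 0 = toLp 2 (NormedSpace.exp (t • M) *ᵥ y 0) := by simp [f]
  rw [← hft, ← hf0]
  exact (norm_le_norm_add_norm_sub' _ _).trans
    (add_le_add_right (norm_sub_le_of_norm_deriv_le_deriv ht hf hB bound) _)

theorem eNorm_le_of_exp_decay {n : ℕ} {K lam K₀ lam₀ T t : ℝ}
    (hK : 0 ≤ K) (hK₀ : 0 ≤ K₀) (hlam : 0 < lam + lam₀) {M : Matrix (Fin n) (Fin n) ℝ}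
    (hM : ∀ s : ℝ, 0 ≤ s → frobNorm (matExp (s • M)) ≤ K * Real.exp (-lam * s))
    {h y : ℝ → Fin n → ℝ}
    (hh : ∀ s ∈ Icc 0 T, eNorm (h s) ≤ K₀ * Real.exp (-lam₀ * (T - s)))
    (hy : ∀ s ∈ Icc 0 T, HasDerivAt y (M *ᵥ y s + h s) s) (ht : t ∈ Icc 0 T) :
    eNorm (y t) ≤ K * Real.exp (-lam * t) * eNorm (y 0)
      + K * K₀ / (lam + lam₀) * Real.exp (-lam₀ * (T - t)) := by
  obtain ⟨ht0, htT⟩ := ht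
  have hM' (s : ℝ) (hs : 0 ≤ s) : ‖NormedSpace.exp (s • M)‖ ≤ K * Real.exp (-lam * s) :=
    (frobNorm_eq_norm _).symm.trans_le (hM s hs)
  set C := K * K₀ / (lam + lam₀)
  set B : ℝ → ℝ := fun u => C * Real.exp ((lam + lam₀) * u - (lam * t + lam₀ * T))
  have hB (u : ℝ) : HasDerivAt B
      (K * Real.exp (-lam * (t - u)) * (K₀ * Real.exp (-lam₀ * (T - u)))) u := by
    refine ((((hasDerivAt_id u).const_mul (lam + lam₀)).sub_const
      (lam * t + lam₀ * T)).exp.const_mul C).congr_deriv ?_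
    rw [mul_mul_mul_comm, ← Real.exp_add, id, mul_one]
    simp only [C]
    field_simp
    ring_nf
  have bound : ∀ u ∈ Ico 0 t, ‖toLp 2 (NormedSpace.exp ((t - u) • M) *ᵥ h u)‖
      ≤ K * Real.exp (-lam * (t - u)) * (K₀ * Real.exp (-lam₀ * (T - u))) := by
    intro u hu
    have hEu := hM' (t - u) (by linarith [hu.2])
    refine (frobenius_norm_toLp_mulVec_le _ _).trans
      (mul_le_mul hEu ?_ (norm_nonneg _) ((norm_nonneg _).trans hEu))
    rw [← eNorm_eq_norm_toLp]
    exact hh u ⟨hu.1, hu.2.le.trans htT⟩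
  have hB0 : 0 ≤ B 0 := by positivity
  rw [eNorm_eq_norm_toLp, eNorm_eq_norm_toLp]
  calc ‖toLp 2 (y t)‖
      ≤ ‖toLp 2 (NormedSpace.exp (t • M) *ᵥ y 0)‖ + (B t - B 0) :=
        norm_toLp_le_of_hasDerivAt_mulVec_add M ht0
          (fun u hu => hy u ⟨hu.1, hu.2.trans htT⟩) (fun u _ => hB u) bound
    _ ≤ K * Real.exp (-lam * t) * ‖toLp 2 (y 0)‖ + B t := by
        gcongr
        · exact (frobenius_norm_toLp_mulVec_le _ _).trans
            (mul_le_mul_of_nonneg_right (hM' t ht0) (norm_nonneg _))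
        · linarith
    _ = K * Real.exp (-lam * t) * ‖toLp 2 (y 0)‖ + C * Real.exp (-lam₀ * (T - t)) := by
        simp only [B]
        ring_nf

end

theorem forward_ode_turnpike_estimate_general {n : ℕ}
    (K lam K₀ lam₀ : ℝ)
    (hK : 0 < K) (hlam : 0 < lam) (hK₀ : 0 < K₀) (hlam₀ : 0 < lam₀) :
    ∃ K' > (0:ℝ), ∃ K'' > (0:ℝ), ∃ μ > (0:ℝ), ∀ T : ℝ, 0 < T →
      ∀ M : Matrix (Fin n) (Fin n) ℝ,
      (∀ t : ℝ, 0 ≤ t → frobNorm (matExp (t • M)) ≤ K * Real.exp (-lam * t)) →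
      ∀ c : Fin n → ℝ, ∀ h y : ℝ → Fin n → ℝ,
        ContinuousOn h (Set.Icc 0 T) →
        (∀ t ∈ Set.Icc (0:ℝ) T, eNorm (h t) ≤ K₀ * Real.exp (-lam₀ * (T - t))) →
        (∀ t ∈ Set.Icc (0:ℝ) T, HasDerivAt y (M.mulVec (y t) + h t) t) →
        ∀ t ∈ Set.Icc (0:ℝ) T,
          eNorm (y t) ≤ K * Real.exp (-lam * t) * eNorm (y 0)
              + K' * (Real.exp (-lam * t) + Real.exp (-lam * (T - t))
                + Real.exp (-lam₀ * (T - t)))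
          ∧ eNorm (y t) ≤ K'' * (eNorm (y 0) + 1)
              * (Real.exp (-μ * t) + Real.exp (-μ * (T - t))) := by
  have hK' : 0 < K * K₀ / (lam + lam₀) := by positivity
  refine ⟨_, hK', _, add_pos hK hK', min lam lam₀, lt_min hlam hlam₀, ?_⟩
  intro T _ M hM _ h y _ hh hy t ht
  have hbound := eNorm_le_of_exp_decay hK.le hK₀.le (by positivity) hM hh hy ht
  set K' := K * K₀ / (lam + lam₀)
  set μ := min lam lam₀
  set N := eNorm (y 0)
  have hN : 0 ≤ N := Real.sqrt_nonneg _
  have hdecay : Real.exp (-lam * t) ≤ Real.exp (-μ * t) := by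
    gcongr
    · exact ht.1
    · exact min_le_left lam lam₀
  have hdecay₀ : Real.exp (-lam₀ * (T - t)) ≤ Real.exp (-μ * (T - t)) := by
    gcongr
    · exact sub_nonneg.2 ht.2
    · exact min_le_right lam lam₀
  refine ⟨hbound.trans ?_, hbound.trans ?_⟩
  · linarith [mul_pos hK' (Real.exp_pos (-lam * t)), mul_pos hK' (Real.exp_pos (-lam * (T - t)))]
  · calc K * Real.exp (-lam * t) * N + K' * Real.exp (-lam₀ * (T - t))
        ≤ K * Real.exp (-μ * t) * N + K' * Real.exp (-μ * (T - t)) := by gcongr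
      _ ≤ (K + K') * (N + 1) * (Real.exp (-μ * t) + Real.exp (-μ * (T - t))) := by
        have ha := (Real.exp_pos (-μ * t)).le
        have hb := (Real.exp_pos (-μ * (T - t))).le
        nlinarith [mul_nonneg hK.le ha, mul_nonneg hK'.le ha, mul_nonneg (mul_nonneg hK'.le hN) ha,
          mul_nonneg hK.le hb, mul_nonneg (mul_nonneg hK.le hN) hb,
          mul_nonneg (mul_nonneg hK'.le hN) hb]

/-- forward linear ODE estimate.  If `‖exp(tM)‖ ≤ K e^{-λt}` for `t ≥ 0`
and `y' = M y + h` on `[0, T]` with `|h(t)| ≤ K₀ e^{-λ₀(T-t)}`, then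
`|y(t)| ≤ K e^{-λt}|y(0)| + K'(e^{-λt} + e^{-λ(T-t)} + e^{-λ₀(T-t)})` with `K'`
independent of `T`; in particular
`|y(t)| ≤ K''(|y(0)| + 1)(e^{-μt} + e^{-μ(T-t)})` with `K'', μ` independent of `T`. -/
theorem forward_ode_turnpike_estimate {n : ℕ} (hn : 0 < n)
    (K lam K₀ lam₀ : ℝ)
    (hK : 0 < K) (hlam : 0 < lam) (hK₀ : 0 < K₀) (hlam₀ : 0 < lam₀)
    (hne : lam₀ ≠ lam) :
    ∃ K' > (0:ℝ), ∃ K'' > (0:ℝ), ∃ μ > (0:ℝ), ∀ T : ℝ, 0 < T →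
      ∀ M : Matrix (Fin n) (Fin n) ℝ,
      (∀ t : ℝ, 0 ≤ t → frobNorm (matExp (t • M)) ≤ K * Real.exp (-lam * t)) →
      ∀ c : Fin n → ℝ, ∀ h y : ℝ → Fin n → ℝ,
        ContinuousOn h (Set.Icc 0 T) →
        (∀ t ∈ Set.Icc (0:ℝ) T, eNorm (h t) ≤ K₀ * Real.exp (-lam₀ * (T - t))) →
        (∀ t ∈ Set.Icc (0:ℝ) T, HasDerivAt y (M.mulVec (y t) + h t) t) →
        ∀ t ∈ Set.Icc (0:ℝ) T,
          eNorm (y t) ≤ K * Real.exp (-lam * t) * eNorm (y 0)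
              + K' * (Real.exp (-lam * t) + Real.exp (-lam * (T - t))
                + Real.exp (-lam₀ * (T - t)))
          ∧ eNorm (y t) ≤ K'' * (eNorm (y 0) + 1)
              * (Real.exp (-μ * t) + Real.exp (-μ * (T - t))) :=
  forward_ode_turnpike_estimate_general K lam K₀ lam₀ hK hlam hK₀ hlam₀
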